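/- (Fundamental Identity) For every n ≥ 1, m_n = L_n − 2·c_n; equivalently, m_n = N₃(B_n) − N₁(B_n), i.e., the pillar length equals the excess of 3's over 1's in the corresponding block. -/

import Mathlib

/-- Generation operator: expand a run-length vector `R` starting with symbol `s`,
alternating between `s` and `4 - s` from run to run. -/
def G : List ℕ → ℕ → List ℕ
  | [], _ => []
  | r :: rs, s => List.replicate r s ++ G rs (4 - s)

/-- Pillar sequences: `P 1 = [3]`, `P (n+1) = G (P n) 3` for `n ≥ 1`. -/
def P : ℕ → List ℕ
  | 0 => []
  | 1 => [3]
  | n + 2 => G (P (n + 1)) 3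

/-- Block sequences: `B 1 = G [1,3,3,3,1] 1`, `B (n+1) = B n ++ P n ++ B n` for `n ≥ 1`. -/
def B : ℕ → List ℕ
  | 0 => []
  | 1 => G [1, 3, 3, 3, 1] 1
  | n + 2 => B (n + 1) ++ P (n + 1) ++ B (n + 1)

/-!
Every entry of `P n` is a run length of `P (n+1)`, so `m (n+1) = N₁(P n) + 3 N₃(P n)`, while the
excess `N₃ - N₁` of `B (n+1) = B n ++ P n ++ B n` is twice that of `B n` plus `N₃(P n) - N₁(P n)`.
By induction the excess of `B n` is `m n = N₁(P n) + N₃(P n)`, and the two sides agree. The first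
identity follows because `B n` is a word over `{1, 3}`, so `L n = N₁(B n) + N₃(B n)`.
-/

namespace List

variable {a b : ℕ} {l : List ℕ}

theorem count_add_count_eq_length (hl : l ⊆ [a, b]) (hab : a ≠ b) :
    l.count a + l.count b = l.length := by
  induction l with
  | nil => rfl
  | cons x t ih =>
    have ht := ih (subset_of_cons_subset hl)
    rcases mem_pair.mp (hl mem_cons_self) with rfl | rfl <;>
      simp [hab, hab.symm] <;> omega

theorem sum_eq_count_mul_add_count_mul (hl : l ⊆ [a, b]) (hab : a ≠ b) :
    l.sum = l.count a * a + l.count b * b := by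
  induction l with
  | nil => simp
  | cons x t ih =>
    have ht := ih (subset_of_cons_subset hl)
    rcases mem_pair.mp (hl mem_cons_self) with rfl | rfl <;>
      simp [hab, hab.symm, ht] <;> ring

end List

theorem length_G (R : List ℕ) (s : ℕ) : (G R s).length = R.sum := by
  induction R generalizing s with
  | nil => rfl
  | cons r rs ih => simp [G, ih]

theorem G_subset (R : List ℕ) {s : ℕ} (hs : s ∈ [1, 3]) : G R s ⊆ [1, 3] := by
  induction R generalizing s with
  | nil => exact List.nil_subset _
  | cons r rs ih =>
    have hs' : 4 - s ∈ [1, 3] := by rcases List.mem_pair.mp hs with rfl | rfl <;> simp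
    exact List.append_subset.mpr
      ⟨fun x hx => (List.eq_of_mem_replicate hx) ▸ hs, ih hs'⟩

theorem P_subset : ∀ n, P n ⊆ [1, 3]
  | 0 => List.nil_subset _
  | 1 => by simp [P]
  | _ + 2 => G_subset _ (by simp)

theorem B_subset : ∀ n, B n ⊆ [1, 3]
  | 0 => List.nil_subset _
  | 1 => G_subset _ (by simp)
  | n + 2 => List.append_subset.mpr
      ⟨List.append_subset.mpr ⟨B_subset (n + 1), P_subset (n + 1)⟩, B_subset (n + 1)⟩

theorem length_P_eq_count_three_sub_count_one (k : ℕ) :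
    ((P (k + 1)).length : ℤ) = (B (k + 1)).count 3 - (B (k + 1)).count 1 := by
  induction k with
  | zero => decide
  | succ k ih =>
    have hP : P (k + 2) = G (P (k + 1)) 3 := rfl
    have hB : B (k + 2) = B (k + 1) ++ P (k + 1) ++ B (k + 1) := rfl
    have hsum := List.sum_eq_count_mul_add_count_mul (P_subset (k + 1)) (by decide : 1 ≠ 3)
    have hlen := List.count_add_count_eq_length (P_subset (k + 1)) (by decide : 1 ≠ 3)
    simp only [hP, hB, length_G, List.count_append]
    omega

/-- Fundamental identity: for every `n ≥ 1`, `m n = L n − 2·c n`; equivalently,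
`m n = N₃(B n) − N₁(B n)`, the excess of `3`s over `1`s in the block `B n`. -/
theorem fundamental_identity :
    ∀ n : ℕ, 1 ≤ n →
      ((P n).length : ℤ) = ((B n).length : ℤ) - 2 * ((B n).count 1 : ℤ) ∧
      ((P n).length : ℤ) = ((B n).count 3 : ℤ) - ((B n).count 1 : ℤ) := by
  intro n hn
  obtain ⟨k, rfl⟩ := Nat.exists_eq_add_of_le' hn
  have hexcess := length_P_eq_count_three_sub_count_one k
  have hlen := List.count_add_count_eq_length (B_subset (k + 1)) (by decide : 1 ≠ 3)
  exact ⟨by omega, hexcess⟩
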